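/- Sobolev bound uniform in the period: there exists C_p for each p ∈ [2,6] such that for all R, L ≥ 1 and all f ∈ H¹_loc(ℝ³;ℂ) satisfying the magnetic periodicity conditions of the space E^{3D}_{R,L}, one has ‖f‖_{L^p(Q_{R,L})} ≤ C_p ‖f‖_{H¹(Q_{R,L})}, where Q_{R,L} = (-R/2,R/2)² × (-L/2,L/2). -/

import Mathlib

open MeasureTheory Complex

noncomputable section

/-- Three-dimensional Euclidean space. -/
abbrev V3 := EuclideanSpace ℝ (Fin 3)

/-- The box `Q_{R,L} = (-R/2,R/2)² × (-L/2,L/2)`. -/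
def boxRL (R L : ℝ) : Set V3 := {x | |x 0| < R / 2 ∧ |x 1| < R / 2 ∧ |x 2| < L / 2}

/-!
On a box whose sides have length at least one, the fundamental theorem of calculus along a
coordinate line bounds `‖F x‖⁴` by the line integral of `‖F‖⁴ + |∂ᵢ ‖F‖⁴| ≤ ‖F‖³ (‖F‖ + 4 |∇F|)`,
with no constant depending on the side lengths. Feeding these three line bounds into the
Gagliardo–Nirenberg grid-lines inequality and Cauchy–Schwarz gives
`X² ≤ (∫ ‖F‖³ (‖F‖ + 4 |∇F|))³ ≤ (X · 32 ‖F‖²_{H¹})^{3/2}` for `X = ∫ ‖F‖⁶`; since `X` is finite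
this absorbs to `X ≤ (32 ‖F‖²_{H¹})³`. The `L^p` bounds for `2 ≤ p ≤ 6` then follow by
interpolating between `L²` and `L⁶`.
-/

open Set Function
open scoped ENNReal

theorem abs_le_setIntegral_abs_add_abs_deriv {φ φ' : ℝ → ℝ} {a b s : ℝ}
    (hφ : ∀ t, HasDerivAt φ (φ' t) t) (hφ' : Continuous φ') (hab : 1 ≤ b - a)
    (hs : s ∈ Icc a b) :
    |φ s| ≤ ∫ t in Icc a b, (|φ t| + |φ' t|) := by
  have hφc : Continuous φ := continuous_iff_continuousAt.2 fun t => (hφ t).continuousAt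
  have hint : ∀ {g : ℝ → ℝ}, Continuous g → IntegrableOn g (Icc a b) :=
    fun hg => hg.integrableOn_Icc
  set K := ∫ t in Icc a b, |φ' t|
  have hclose : ∀ t ∈ Icc a b, |φ s| - K ≤ |φ t| := by
    intro t ht
    have hFTC : φ s - φ t = ∫ r in t..s, φ' r :=
      (intervalIntegral.integral_eq_sub_of_hasDerivAt (fun r _ => hφ r)
        (hφ'.intervalIntegrable _ _)).symm
    have hsub : uIoc t s ⊆ Icc a b := uIoc_subset_uIcc.trans (uIcc_subset_Icc ht hs)
    have hosc : |φ s - φ t| ≤ K := by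
      rw [hFTC]
      calc |∫ r in t..s, φ' r| ≤ ∫ r in uIoc t s, |φ' r| := by
            simpa only [Real.norm_eq_abs] using
              intervalIntegral.norm_integral_le_integral_norm_uIoc (f := φ') (μ := volume)
        _ ≤ K := setIntegral_mono_set (hint hφ'.abs) (.of_forall fun _ => abs_nonneg _)
            hsub.eventuallyLE
    linarith [abs_sub_abs_le_abs_sub (φ s) (φ t)]
  have hmean : (b - a) * (|φ s| - K) ≤ ∫ t in Icc a b, |φ t| := by
    have := setIntegral_mono_on (integrableOn_const (by simp)) (hint hφc.abs)
      measurableSet_Icc hclose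
    rwa [setIntegral_const, Real.volume_real_Icc_of_le (by linarith), smul_eq_mul] at this
  have hφ0 : 0 ≤ ∫ t in Icc a b, |φ t| :=
    setIntegral_nonneg measurableSet_Icc fun _ _ => abs_nonneg _
  rw [integral_add (hint hφc.abs) (hint hφ'.abs)]
  rcases le_total (|φ s|) K with hsmall | hlarge
  · linarith
  · -- `|φ s| - K ≤ (b - a) * (|φ s| - K)` because `1 ≤ b - a`
    nlinarith

variable {E : Type*} [NormedAddCommGroup E] [InnerProductSpace ℝ E]

theorem norm_pow_four_le_setIntegral {γ γ' : ℝ → E} {a b s : ℝ}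
    (hγ : ∀ t, HasDerivAt γ (γ' t) t) (hγ' : Continuous γ') (hab : 1 ≤ b - a)
    (hs : s ∈ Icc a b) :
    ‖γ s‖ ^ 4 ≤ ∫ t in Icc a b, ‖γ t‖ ^ 3 * (‖γ t‖ + 4 * ‖γ' t‖) := by
  have hγc : Continuous γ := continuous_iff_continuousAt.2 fun t => (hγ t).continuousAt
  have hφ : ∀ t, HasDerivAt (fun r => (‖γ r‖ ^ 2) ^ 2)
      (4 * ‖γ t‖ ^ 2 * inner ℝ (γ t) (γ' t)) t :=
    fun t => ((hγ t).norm_sq.pow 2).congr_deriv (by ring)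
  have hline := abs_le_setIntegral_abs_add_abs_deriv hφ (by fun_prop) hab hs
  have hpointwise : ∀ t, |(‖γ t‖ ^ 2) ^ 2| + |4 * ‖γ t‖ ^ 2 * inner ℝ (γ t) (γ' t)|
      ≤ ‖γ t‖ ^ 3 * (‖γ t‖ + 4 * ‖γ' t‖) := by
    intro t
    have hcs := abs_real_inner_le_norm (γ t) (γ' t)
    simp only [abs_mul, abs_pow, abs_norm, Nat.abs_ofNat]
    nlinarith [pow_nonneg (norm_nonneg (γ t)) 2]
  calc ‖γ s‖ ^ 4 = |(‖γ s‖ ^ 2) ^ 2| := by rw [abs_of_nonneg (by positivity)]; ring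
    _ ≤ _ := hline
    _ ≤ _ := setIntegral_mono_on (Continuous.integrableOn_Icc (by fun_prop))
        (Continuous.integrableOn_Icc (by fun_prop)) measurableSet_Icc fun t _ => hpointwise t

section GradNorm

variable {ι : Type*} [Fintype ι] [DecidableEq ι]

def gradNorm (F : (ι → ℝ) → E) (y : ι → ℝ) : ℝ :=
  √(∑ j, ‖fderiv ℝ F y (Pi.single j 1)‖ ^ 2)

theorem norm_fderiv_single_le_gradNorm (F : (ι → ℝ) → E) (y : ι → ℝ) (i : ι) :
    ‖fderiv ℝ F y (Pi.single i 1)‖ ≤ gradNorm F y :=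
  Real.le_sqrt_of_sq_le <| Finset.single_le_sum (f := fun j => ‖fderiv ℝ F y (Pi.single j 1)‖ ^ 2)
    (fun _ _ => sq_nonneg _) (Finset.mem_univ i)

theorem gradNorm_sq (F : (ι → ℝ) → E) (y : ι → ℝ) :
    gradNorm F y ^ 2 = ∑ j, ‖fderiv ℝ F y (Pi.single j 1)‖ ^ 2 :=
  Real.sq_sqrt (Finset.sum_nonneg fun _ _ => sq_nonneg _)

theorem ContDiff.continuous_gradNorm {F : (ι → ℝ) → E} (hF : ContDiff ℝ 1 F) :
    Continuous (gradNorm F) := by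
  have := hF.continuous_fderiv one_ne_zero
  unfold gradNorm
  fun_prop

theorem ofReal_norm_pow_four_le_lintegral_update {F : (ι → ℝ) → E} (hF : ContDiff ℝ 1 F)
    {a b : ι → ℝ} (hab : ∀ i, 1 ≤ b i - a i) {x : ι → ℝ} (hx : x ∈ Icc a b) (i : ι) :
    ENNReal.ofReal (‖F x‖ ^ 4) ≤ ∫⁻ t in Icc (a i) (b i), ENNReal.ofReal
      (‖F (update x i t)‖ ^ 3 * (‖F (update x i t)‖ + 4 * gradNorm F (update x i t))) := by
  have hγ : ∀ t, HasDerivAt (fun t => F (update x i t))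
      (fderiv ℝ F (update x i t) (Pi.single i 1)) t := fun t =>
    (hF.differentiable one_ne_zero _).hasFDerivAt.comp_hasDerivAt t (hasDerivAt_update x i t)
  have hupdate : Continuous (update x i) := continuous_const.update i continuous_id
  have hγ' : Continuous fun t => fderiv ℝ F (update x i t) (Pi.single i 1) :=
    ((hF.continuous_fderiv one_ne_zero).comp hupdate).clm_apply continuous_const
  have hline := norm_pow_four_le_setIntegral hγ hγ' (hab i) ⟨hx.1 i, hx.2 i⟩
  rw [update_eq_self] at hline
  calc ENNReal.ofReal (‖F x‖ ^ 4)
      ≤ ENNReal.ofReal (∫ t in Icc (a i) (b i), ‖F (update x i t)‖ ^ 3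
          * (‖F (update x i t)‖ + 4 * ‖fderiv ℝ F (update x i t) (Pi.single i 1)‖)) :=
        ENNReal.ofReal_le_ofReal hline
    _ = ∫⁻ t in Icc (a i) (b i), ENNReal.ofReal (‖F (update x i t)‖ ^ 3
          * (‖F (update x i t)‖ + 4 * ‖fderiv ℝ F (update x i t) (Pi.single i 1)‖)) :=
        ofReal_integral_eq_lintegral_ofReal (Continuous.integrableOn_Icc (by fun_prop))
          (.of_forall fun _ => by positivity)
    _ ≤ _ := lintegral_mono fun t => ENNReal.ofReal_le_ofReal <| by
        gcongr
        exact norm_fderiv_single_le_gradNorm F _ i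

end GradNorm

theorem ENNReal.lintegral_mul_sq_le {α : Type*} [MeasurableSpace α] {μ : Measure α}
    {f g : α → ℝ≥0∞} (hf : AEMeasurable f μ) (hg : AEMeasurable g μ) :
    (∫⁻ x, f x * g x ∂μ) ^ 2 ≤ (∫⁻ x, f x ^ 2 ∂μ) * ∫⁻ x, g x ^ 2 ∂μ := by
  have h := ENNReal.lintegral_mul_le_Lp_mul_Lq μ .two_two hf hg
  simp only [Pi.mul_apply, ENNReal.rpow_two] at h
  calc (∫⁻ x, f x * g x ∂μ) ^ 2
      ≤ ((∫⁻ x, f x ^ 2 ∂μ) ^ (1 / 2 : ℝ) * (∫⁻ x, g x ^ 2 ∂μ) ^ (1 / 2 : ℝ)) ^ 2 := by gcongr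
    _ = _ := by
      rw [mul_pow, ← ENNReal.rpow_natCast, ← ENNReal.rpow_mul, ← ENNReal.rpow_natCast,
        ← ENNReal.rpow_mul]
      norm_num

theorem ENNReal.le_cube_of_sq_le_cube_of_sq_le_mul {X H Y : ℝ≥0∞} (hX : X ≠ ⊤)
    (hXH : X ^ 2 ≤ H ^ 3) (hHX : H ^ 2 ≤ X * Y) : X ≤ Y ^ 3 := by
  rcases eq_or_ne X 0 with rfl | hX0
  · exact zero_le
  have h : X * X ^ 3 ≤ Y ^ 3 * X ^ 3 :=
    calc X * X ^ 3 = (X ^ 2) ^ 2 := by ring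
      _ ≤ (H ^ 3) ^ 2 := by gcongr
      _ = (H ^ 2) ^ 3 := by ring
      _ ≤ (X * Y) ^ 3 := by gcongr
      _ = Y ^ 3 * X ^ 3 := by ring
  exact (ENNReal.mul_le_mul_iff_left (pow_ne_zero 3 hX0) (ENNReal.pow_ne_top hX)).mp h

theorem lintegral_ofReal_norm_pow_six_sq_le {F : (Fin 3 → ℝ) → E} (hF : ContDiff ℝ 1 F)
    {a b : Fin 3 → ℝ} (hab : ∀ i, 1 ≤ b i - a i) :
    (∫⁻ y in Icc a b, ENNReal.ofReal (‖F y‖ ^ 6)) ^ 2 ≤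
      (∫⁻ y in Icc a b, ENNReal.ofReal (‖F y‖ ^ 3 * (‖F y‖ + 4 * gradNorm F y))) ^ 3 := by
  set h : (Fin 3 → ℝ) → ℝ≥0∞ :=
    fun y => ENNReal.ofReal (‖F y‖ ^ 3 * (‖F y‖ + 4 * gradNorm F y))
  have hFc := hF.continuous
  have hDc := hF.continuous_gradNorm
  have hh : Measurable h := by fun_prop
  have hpi : Measure.pi (fun i => volume.restrict (Icc (a i) (b i))) =
      volume.restrict (Icc a b) := by
    rw [← pi_univ_Icc, volume_pi, Measure.restrict_pi_pi]
  -- grid-lines: `∫ ∏ᵢ (∫ h along the i-th coordinate line) ^ (1/2) ≤ (∫ h) ^ (3/2)`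
  have hgrid := lintegral_prod_lintegral_pow_le (fun i => volume.restrict (Icc (a i) (b i)))
    (p := 3 / 2) (by norm_num [Real.holderConjugate_iff]) hh
  rw [hpi] at hgrid
  norm_num at hgrid
  have hpoint : ∀ x ∈ Icc a b, ENNReal.ofReal (‖F x‖ ^ 6) ≤
      ∏ i, (∫⁻ t in Icc (a i) (b i), h (update x i t)) ^ (1 / 2 : ℝ) := by
    intro x hx
    have hsq : ENNReal.ofReal (‖F x‖ ^ 4) ^ (1 / 2 : ℝ) = ENNReal.ofReal (‖F x‖ ^ 2) := by
      rw [show ‖F x‖ ^ 4 = (‖F x‖ ^ 2) ^ 2 by ring, ENNReal.ofReal_pow (by positivity), one_div]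
      exact_mod_cast ENNReal.pow_rpow_inv_natCast two_ne_zero _
    calc ENNReal.ofReal (‖F x‖ ^ 6) = ∏ _i : Fin 3, ENNReal.ofReal (‖F x‖ ^ 4) ^ (1 / 2 : ℝ) := by
          rw [hsq, Finset.prod_const, Finset.card_fin, ← ENNReal.ofReal_pow (by positivity)]
          ring_nf
      _ ≤ _ := Finset.prod_le_prod' fun i _ => ENNReal.rpow_le_rpow
          (ofReal_norm_pow_four_le_lintegral_update hF hab hx i) (by norm_num)
  calc (∫⁻ y in Icc a b, ENNReal.ofReal (‖F y‖ ^ 6)) ^ 2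
      ≤ ((∫⁻ y in Icc a b, h y) ^ (3 / 2 : ℝ)) ^ 2 := by
        gcongr
        exact (setLIntegral_mono' measurableSet_Icc hpoint).trans hgrid
    _ = (∫⁻ y in Icc a b, h y) ^ 3 := by
        rw [← ENNReal.rpow_natCast, ← ENNReal.rpow_mul]
        norm_num

theorem integral_norm_pow_six_le {F : (Fin 3 → ℝ) → E} (hF : ContDiff ℝ 1 F)
    {a b : Fin 3 → ℝ} (hab : ∀ i, 1 ≤ b i - a i) :
    ∫ y in Icc a b, ‖F y‖ ^ 6 ≤
      32 ^ 3 * (∫ y in Icc a b, (‖F y‖ ^ 2 + gradNorm F y ^ 2)) ^ 3 := by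
  have hFc := hF.continuous
  have hDc := hF.continuous_gradNorm
  set X := ∫⁻ y in Icc a b, ENNReal.ofReal (‖F y‖ ^ 6)
  set T := ∫⁻ y in Icc a b, ENNReal.ofReal (‖F y‖ ^ 2 + gradNorm F y ^ 2)
  have hX : X = ENNReal.ofReal (∫ y in Icc a b, ‖F y‖ ^ 6) :=
    (ofReal_integral_eq_lintegral_ofReal (Continuous.integrableOn_Icc (by fun_prop))
      (.of_forall fun _ => by positivity)).symm
  have hT : T = ENNReal.ofReal (∫ y in Icc a b, (‖F y‖ ^ 2 + gradNorm F y ^ 2)) :=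
    (ofReal_integral_eq_lintegral_ofReal (Continuous.integrableOn_Icc (by fun_prop))
      (.of_forall fun _ => by positivity)).symm
  have hCS : (∫⁻ y in Icc a b, ENNReal.ofReal (‖F y‖ ^ 3 * (‖F y‖ + 4 * gradNorm F y))) ^ 2
      ≤ X * (32 * T) := by
    -- Cauchy–Schwarz, then `(x + 4 y)² ≤ 32 (x² + y²)`
    simp_rw [ENNReal.ofReal_mul (by positivity : (0 : ℝ) ≤ ‖F _‖ ^ 3)]
    have hu : Measurable fun y => ENNReal.ofReal (‖F y‖ ^ 3) :=
      (by fun_prop : Continuous fun y => ‖F y‖ ^ 3).measurable.ennreal_ofReal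
    have hv : Measurable fun y => ENNReal.ofReal (‖F y‖ + 4 * gradNorm F y) :=
      (by fun_prop : Continuous fun y => ‖F y‖ + 4 * gradNorm F y).measurable.ennreal_ofReal
    refine (ENNReal.lintegral_mul_sq_le hu.aemeasurable hv.aemeasurable).trans ?_
    gcongr ?_ * ?_
    · refine le_of_eq (lintegral_congr fun y => ?_)
      rw [← ENNReal.ofReal_pow (by positivity), ← pow_mul]
    · rw [← lintegral_const_mul' _ _ ENNReal.ofNat_ne_top]
      refine lintegral_mono fun y => ?_
      have hD0 : 0 ≤ gradNorm F y := Real.sqrt_nonneg _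
      rw [← ENNReal.ofReal_pow (by positivity), ← ENNReal.ofReal_ofNat,
        ← ENNReal.ofReal_mul (by norm_num)]
      exact ENNReal.ofReal_le_ofReal (by nlinarith [norm_nonneg (F y)])
  have hXT : X ≤ (32 * T) ^ 3 := ENNReal.le_cube_of_sq_le_cube_of_sq_le_mul
    (by rw [hX]; exact ENNReal.ofReal_ne_top) (lintegral_ofReal_norm_pow_six_sq_le hF hab) hCS
  rwa [hX, hT, ← ENNReal.ofReal_ofNat, ← ENNReal.ofReal_mul (by norm_num),
    ← ENNReal.ofReal_pow (by positivity), ENNReal.ofReal_le_ofReal_iff (by positivity),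
    mul_pow] at hXT

theorem rpow_le_rpow_mul_sq_add_rpow_mul_pow_six {p s t : ℝ} (hp : p ∈ Icc (2 : ℝ) 6) (hs : 0 < s)
    (ht : 0 ≤ t) : t ^ p ≤ s ^ (p - 2) * t ^ 2 + s ^ (p - 6) * t ^ 6 := by
  have split : ∀ n : ℕ, t ^ p = t ^ (p - n) * t ^ n := fun n => by
    rw [← Real.rpow_natCast, ← Real.rpow_add' ht (by linarith [hp.1]), sub_add_cancel]
  rcases le_total t s with hts | hst
  · calc t ^ p = t ^ (p - 2) * t ^ 2 := by exact_mod_cast split 2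
      _ ≤ s ^ (p - 2) * t ^ 2 := by gcongr; linarith [hp.1]
      _ ≤ _ := le_add_of_nonneg_right (by positivity)
  · calc t ^ p = t ^ (p - 6) * t ^ 6 := by exact_mod_cast split 6
      _ ≤ s ^ (p - 6) * t ^ 6 := mul_le_mul_of_nonneg_right
        (Real.rpow_le_rpow_of_nonpos hs hst (by linarith [hp.2])) (by positivity)
      _ ≤ _ := le_add_of_nonneg_left (by positivity)

theorem integral_rpow_rpow_one_div_le {α : Type*} [MeasurableSpace α] {μ : Measure α} {u : α → ℝ}
    (hu0 : ∀ x, 0 ≤ u x) (hu : AEMeasurable u μ) (h2 : Integrable (fun x => u x ^ 2) μ)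
    (h6 : Integrable (fun x => u x ^ 6) μ) {p C T : ℝ} (hp : p ∈ Icc (2 : ℝ) 6) (hC : 0 ≤ C)
    (hT2 : ∫ x, u x ^ 2 ∂μ ≤ T) (hT6 : ∫ x, u x ^ 6 ∂μ ≤ C * T ^ 3) :
    (∫ x, u x ^ p ∂μ) ^ (1 / p) ≤ (1 + C) ^ (1 / p) * √T := by
  have hp0 : 0 < p := by linarith [hp.1]
  have hT : 0 ≤ T := (integral_nonneg fun x => by positivity).trans hT2
  have hup : Integrable (fun x => u x ^ p) μ := by
    refine (h2.add h6).mono' (hu.pow_const p).aestronglyMeasurable (.of_forall fun x => ?_)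
    rw [Real.norm_of_nonneg (Real.rpow_nonneg (hu0 x) p)]
    simpa using rpow_le_rpow_mul_sq_add_rpow_mul_pow_six hp one_pos (hu0 x)
  have hbound : ∀ s > 0, ∫ x, u x ^ p ∂μ ≤ s ^ (p - 2) * T + s ^ (p - 6) * (C * T ^ 3) := by
    intro s hs
    calc ∫ x, u x ^ p ∂μ ≤ ∫ x, (s ^ (p - 2) * u x ^ 2 + s ^ (p - 6) * u x ^ 6) ∂μ :=
          integral_mono hup ((h2.const_mul _).add (h6.const_mul _))
            fun x => rpow_le_rpow_mul_sq_add_rpow_mul_pow_six hp hs (hu0 x)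
      _ ≤ _ := by
        rw [integral_add (h2.const_mul _) (h6.const_mul _), integral_const_mul, integral_const_mul]
        gcongr
  have hIp : ∫ x, u x ^ p ∂μ ≤ (1 + C) * T ^ (p / 2) := by
    rcases hT.eq_or_lt with rfl | hTpos
    · simpa [Real.zero_rpow (by positivity : p / 2 ≠ 0)] using hbound 1 one_pos
    have e2 : √T ^ (p - 2) * T = T ^ (p / 2) := by
      rw [Real.sqrt_eq_rpow, ← Real.rpow_mul hT, ← Real.rpow_add_one hTpos.ne']
      ring_nf
    have e6 : √T ^ (p - 6) * T ^ 3 = T ^ (p / 2) := by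
      rw [Real.sqrt_eq_rpow, ← Real.rpow_mul hT, ← Real.rpow_natCast,
        ← Real.rpow_add hTpos]
      ring_nf
    calc ∫ x, u x ^ p ∂μ ≤ √T ^ (p - 2) * T + √T ^ (p - 6) * (C * T ^ 3) :=
          hbound _ (Real.sqrt_pos.2 hTpos)
      _ = (1 + C) * T ^ (p / 2) := by linear_combination e2 + C * e6
  calc (∫ x, u x ^ p ∂μ) ^ (1 / p) ≤ ((1 + C) * T ^ (p / 2)) ^ (1 / p) := by
        gcongr
        exact integral_nonneg fun x => Real.rpow_nonneg (hu0 x) p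
    _ = (1 + C) ^ (1 / p) * √T := by
        rw [Real.mul_rpow (by positivity) (by positivity), ← Real.rpow_mul hT, Real.sqrt_eq_rpow]
        congr 2
        field_simp

theorem fderiv_comp_toLp_apply_single {ι : Type*} [Fintype ι] [DecidableEq ι]
    {G : Type*} [NormedAddCommGroup G] [NormedSpace ℝ G] (f : EuclideanSpace ℝ ι → G)
    (y : ι → ℝ) (j : ι) :
    fderiv ℝ (fun y => f (WithLp.toLp 2 y)) y (Pi.single j 1) =
      fderiv ℝ f (WithLp.toLp 2 y) (EuclideanSpace.single j 1) := by
  rw [show (fun y => f (WithLp.toLp 2 y)) = f ∘ (EuclideanSpace.equiv ι ℝ).symm from rfl,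
    ContinuousLinearEquiv.comp_right_fderiv]
  rfl

def halfSides (R L : ℝ) : Fin 3 → ℝ := ![R / 2, R / 2, L / 2]

theorem setIntegral_boxRL (R L : ℝ) (G : V3 → ℝ) :
    ∫ x in boxRL R L, G x =
      ∫ y in Icc (-halfSides R L) (halfSides R L), G (WithLp.toLp 2 y) := by
  have hbox : boxRL R L = WithLp.ofLp ⁻¹' univ.pi fun i =>
      Ioo ((-halfSides R L) i) (halfSides R L i) := by
    ext x
    simp [boxRL, halfSides, abs_lt, Fin.forall_fin_succ]
  have hae : (univ.pi fun i => Ioo ((-halfSides R L) i) (halfSides R L i))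
      =ᵐ[volume] Icc (-halfSides R L) (halfSides R L) :=
    Measure.univ_pi_Ioo_ae_eq_Icc
  rw [← Measure.restrict_congr_set hae,
    ← (PiLp.volume_preserving_ofLp (Fin 3)).setIntegral_preimage_emb
      (MeasurableEquiv.toLp 2 (Fin 3 → ℝ)).symm.measurableEmbedding, hbox]

/-- uniform Sobolev bound for the magnetic-periodic space `E^{3D}_{R,L}`.
For each `p ∈ [2,6]` there is `C_p` independent of the periods such that, for all
`R, L ≥ 1` and every `f ∈ H¹_loc(ℝ³;ℂ)` satisfying the magnetic periodicity conditions,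
`‖f‖_{L^p(Q_{R,L})} ≤ C_p ‖f‖_{H¹(Q_{R,L})}`. -/
theorem stmt_19 :
    ∀ p ∈ Set.Icc (2 : ℝ) 6, ∃ Cp > (0 : ℝ), ∀ R ≥ (1 : ℝ), ∀ L ≥ (1 : ℝ),
      ∀ f : V3 → ℂ, ContDiff ℝ 1 f →
      (∀ x : V3, f (x + R • EuclideanSpace.single 0 (1 : ℝ))
          = Complex.exp (-Complex.I * (R : ℂ) * ((x 1 : ℝ) : ℂ) / 2) * f x) →
      (∀ x : V3, f (x + R • EuclideanSpace.single 1 (1 : ℝ))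
          = Complex.exp (Complex.I * (R : ℂ) * ((x 0 : ℝ) : ℂ) / 2) * f x) →
      (∀ x : V3, f (x + L • EuclideanSpace.single 2 (1 : ℝ)) = f x) →
      (∫ x in boxRL R L, ‖f x‖ ^ p) ^ (1 / p)
        ≤ Cp * Real.sqrt (∫ x in boxRL R L,
            (‖f x‖ ^ 2 + ∑ j, ‖fderiv ℝ f x (EuclideanSpace.single j 1)‖ ^ 2)) := by
  intro p hp
  refine ⟨(1 + 32 ^ 3) ^ (1 / p), by positivity, fun R hR L hL f hf _ _ _ => ?_⟩
  set F : (Fin 3 → ℝ) → ℂ := fun y => f (WithLp.toLp 2 y)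
  have hF : ContDiff ℝ 1 F := hf.comp PiLp.contDiff_toLp
  have hab : ∀ i, 1 ≤ halfSides R L i - (-halfSides R L) i := by
    intro i
    fin_cases i <;> simp [halfSides] <;> linarith
  have hFc := hF.continuous
  have hDc := hF.continuous_gradNorm
  have henergy : ∫ x in boxRL R L,
      (‖f x‖ ^ 2 + ∑ j, ‖fderiv ℝ f x (EuclideanSpace.single j 1)‖ ^ 2) =
      ∫ y in Icc (-halfSides R L) (halfSides R L),
        (‖F y‖ ^ 2 + gradNorm F y ^ 2) := by
    simp only [setIntegral_boxRL, gradNorm_sq, F, fderiv_comp_toLp_apply_single]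
  rw [setIntegral_boxRL, henergy]
  refine integral_rpow_rpow_one_div_le (fun _ => norm_nonneg _) hFc.norm.aemeasurable
    (Continuous.integrableOn_Icc (by fun_prop)) (Continuous.integrableOn_Icc (by fun_prop)) hp
    (by norm_num) ?_ (integral_norm_pow_six_le hF hab)
  exact setIntegral_mono_on (Continuous.integrableOn_Icc (by fun_prop))
    (Continuous.integrableOn_Icc (by fun_prop)) measurableSet_Icc
    fun y _ => le_add_of_nonneg_right (sq_nonneg _)
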